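/- Let F be a group with normal subgroups R1, R2, R3. Suppose x1, x2 ∈ R1, y1, y2 ∈ R2, with x1·y1 ∈ R3 and x2·y2 ∈ R3. Then the cross-effect element [y2⁻¹, x1]·[y1⁻¹, x2] lies in R1 ⊓ R2 ⊓ R3 · D, where D = [R1, R2 ⊓ R3] ⊔ [R2, R3 ⊓ R1] ⊔ [R3, R1 ⊓ R2]; more precisely, [y2⁻¹, x1]·[y1⁻¹, x2] ≡ [x1·x2, y1^{x2}·y2]·[x2,y2]⁻¹·[x1,y1]⁻¹ modulo D, and the right-hand side lies in R1 ⊓ R2 ⊓ R3. -/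

import Mathlib

/-!
Write `P = [y₂⁻¹, x₁]`, `Q = [y₁⁻¹, x₂]`, `γᵢ = [xᵢ, yᵢ]` and `ζᵢ = xᵢ yᵢ`. Then
`P, Q ∈ R₁ ⊓ R₂`, `γᵢ ∈ R₁ ⊓ R₂ ⊓ R₃` and `ζᵢ ∈ R₃`, so modulo `[R₁, R₂ ⊓ R₃] [R₃, R₁ ⊓ R₂]` the
elements `P, Q, γ₁, γ₂` commute with `ζ₁, ζ₂`, and `γ₁, γ₂` commute with `P, Q` and with each
other. These commutations are exactly what is needed to move `Q` and then `P` out of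
`[x₁ x₂, y₁^{x₂} y₂] = (x₁ x₂)⁻¹ (y₁^{x₂} y₂)⁻¹ ζ₁ ζ₂`, leaving `γ₁ γ₂` as the remaining factor.
-/

/-- The commutator `[x, y] = x⁻¹ y⁻¹ x y`. -/
def cmt {F : Type*} [Group F] (x y : F) : F := x⁻¹ * y⁻¹ * x * y

section Membership

variable {F : Type*} [Group F] {A B C : Subgroup F} {x y : F}

lemma cmt_mem_left [A.Normal] (hx : x ∈ A) : cmt x y ∈ A := by
  rw [show cmt x y = x⁻¹ * (y⁻¹ * x * y) by simp only [cmt, mul_assoc]]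
  exact mul_mem (inv_mem hx) (Subgroup.Normal.conj_mem' ‹_› x hx y)

lemma cmt_mem_right [B.Normal] (hy : y ∈ B) : cmt x y ∈ B := by
  rw [show cmt x y = (x⁻¹ * y⁻¹ * x) * y from rfl]
  exact mul_mem (Subgroup.Normal.conj_mem' ‹_› y⁻¹ (inv_mem hy) x) hy

lemma cmt_mem_of_mul_mem [C.Normal] (hxy : x * y ∈ C) : cmt x y ∈ C := by
  rw [show cmt x y = (x⁻¹ * (x * y) * x)⁻¹ * (x * y) by simp only [cmt]; group]
  exact mul_mem (inv_mem (Subgroup.Normal.conj_mem' ‹_› _ hxy x)) hxy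

lemma cmt_mem_inf_inf [A.Normal] [B.Normal] [C.Normal] (hx : x ∈ A) (hy : y ∈ B)
    (hxy : x * y ∈ C) : cmt x y ∈ A ⊓ B ⊓ C :=
  ⟨⟨cmt_mem_left hx, cmt_mem_right hy⟩, cmt_mem_of_mul_mem hxy⟩

lemma cmt_mul_conj_mul_mul_inv_mem_inf_inf [A.Normal] [B.Normal] [C.Normal] {x1 x2 y1 y2 : F}
    (hx1 : x1 ∈ A) (hx2 : x2 ∈ A) (hy1 : y1 ∈ B) (hy2 : y2 ∈ B)
    (hxy1 : x1 * y1 ∈ C) (hxy2 : x2 * y2 ∈ C) :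
    cmt (x1 * x2) ((x2⁻¹ * y1 * x2) * y2) * (cmt x2 y2)⁻¹ * (cmt x1 y1)⁻¹ ∈ A ⊓ B ⊓ C := by
  have hprod : x1 * x2 * (x2⁻¹ * y1 * x2 * y2) = (x1 * y1) * (x2 * y2) := by group
  refine mul_mem (mul_mem ?_ (inv_mem (cmt_mem_inf_inf hx2 hy2 hxy2)))
    (inv_mem (cmt_mem_inf_inf hx1 hy1 hxy1))
  exact cmt_mem_inf_inf (mul_mem hx1 hx2)
    (mul_mem (Subgroup.Normal.conj_mem' ‹_› y1 hy1 x2) hy2) (hprod ▸ mul_mem hxy1 hxy2)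

end Membership

lemma map_cmt {F G : Type*} [Group F] [Group G] (f : F →* G) (x y : F) :
    f (cmt x y) = cmt (f x) (f y) := by
  simp only [cmt, map_mul, map_inv]

lemma MonoidHom.commute_of_commutator_le_ker {F G : Type*} [Group F] [Group G] (f : F →* G)
    {A B : Subgroup F} (hAB : ⁅A, B⁆ ≤ f.ker) {a b : F} (ha : a ∈ A) (hb : b ∈ B) :
    Commute (f a) (f b) := by
  rw [← commutatorElement_eq_one_iff_commute, ← map_commutatorElement]
  exact hAB (Subgroup.commutator_mem_commutator ha hb)

lemma cmt_mul_conj_mul_mul_inv_eq {G : Type*} [Group G] {a b u v : G}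
    (hQ : Commute (cmt u⁻¹ b) (a * u * (b * v) * (cmt b v)⁻¹ * (cmt a u)⁻¹))
    (hγ : Commute (cmt a u) (v * b)) (hP : Commute (cmt v⁻¹ a) (v * b)) :
    cmt (a * b) (b⁻¹ * u * b * v) * (cmt b v)⁻¹ * (cmt a u)⁻¹ = cmt v⁻¹ a * cmt u⁻¹ b := by
  have hζγ : a * u * (b * v) * (cmt b v)⁻¹ * (cmt a u)⁻¹ = u * a * (v * b) := by
    calc a * u * (b * v) * (cmt b v)⁻¹ * (cmt a u)⁻¹
        = a * u * ((v * b) * (cmt a u)⁻¹) := by simp only [cmt]; group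
      _ = a * u * (cmt a u)⁻¹ * (v * b) := by
        rw [← hγ.inv_left.eq]; simp only [mul_assoc]
      _ = u * a * (v * b) := by simp only [cmt]; group
  have hconj : (v * b)⁻¹ * cmt v⁻¹ a * (v * b) = cmt v⁻¹ a := by
    rw [mul_assoc, hP.eq, inv_mul_cancel_left]
  calc cmt (a * b) (b⁻¹ * u * b * v) * (cmt b v)⁻¹ * (cmt a u)⁻¹
      = (b⁻¹ * a⁻¹ * v⁻¹ * u⁻¹) *
          (cmt u⁻¹ b * (a * u * (b * v) * (cmt b v)⁻¹ * (cmt a u)⁻¹)) := by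
        simp only [cmt]; group
    _ = (b⁻¹ * a⁻¹ * v⁻¹ * u⁻¹) * (u * a * (v * b)) * cmt u⁻¹ b := by
        rw [hQ.eq, hζγ]; simp only [mul_assoc]
    _ = (v * b)⁻¹ * cmt v⁻¹ a * (v * b) * cmt u⁻¹ b := by simp only [cmt]; group
    _ = cmt v⁻¹ a * cmt u⁻¹ b := by rw [hconj]

theorem cross_effect_mem {F : Type*} [Group F] {R1 R2 R3 N : Subgroup F}
    [R1.Normal] [R2.Normal] [R3.Normal] [N.Normal]
    (h1 : ⁅R1, R2 ⊓ R3⁆ ≤ N) (h3 : ⁅R3, R1 ⊓ R2⁆ ≤ N) {x1 x2 y1 y2 : F}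
    (hx1 : x1 ∈ R1) (hx2 : x2 ∈ R1) (hy1 : y1 ∈ R2) (hy2 : y2 ∈ R2)
    (hxy1 : x1 * y1 ∈ R3) (hxy2 : x2 * y2 ∈ R3) :
    (cmt (x1 * x2) ((x2⁻¹ * y1 * x2) * y2) * (cmt x2 y2)⁻¹ * (cmt x1 y1)⁻¹)⁻¹ *
      (cmt y2⁻¹ x1 * cmt y1⁻¹ x2) ∈ N := by
  set π := QuotientGroup.mk' N
  have c1 : ∀ {s t}, s ∈ R1 → t ∈ R2 ⊓ R3 → Commute (π s) (π t) :=
    π.commute_of_commutator_le_ker (by rwa [QuotientGroup.ker_mk'])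
  have c3 : ∀ {s t}, s ∈ R3 → t ∈ R1 ⊓ R2 → Commute (π s) (π t) :=
    π.commute_of_commutator_le_ker (by rwa [QuotientGroup.ker_mk'])
  have hP : cmt y2⁻¹ x1 ∈ R1 ⊓ R2 := ⟨cmt_mem_right hx1, cmt_mem_left (inv_mem hy2)⟩
  have hQ : cmt y1⁻¹ x2 ∈ R1 ⊓ R2 := ⟨cmt_mem_right hx2, cmt_mem_left (inv_mem hy1)⟩
  have hγ1 : cmt x1 y1 ∈ R2 ⊓ R3 := ⟨cmt_mem_right hy1, cmt_mem_of_mul_mem hxy1⟩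
  have hγ2 : cmt x2 y2 ∈ R2 ⊓ R3 := ⟨cmt_mem_right hy2, cmt_mem_of_mul_mem hxy2⟩
  have hγ1' : cmt x1 y1 ∈ R1 ⊓ R2 := ⟨cmt_mem_left hx1, hγ1.1⟩
  have hvb : π (y2 * x2) = π (x2 * y2) * (π (cmt x2 y2))⁻¹ := by
    rw [← map_inv, ← map_mul]
    congr 1
    simp only [cmt]; group
  have hQ' : Commute (π (cmt y1⁻¹ x2))
      (π (x1 * y1) * π (x2 * y2) * (π (cmt x2 y2))⁻¹ * (π (cmt x1 y1))⁻¹) :=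
    (((c3 hxy1 hQ).symm.mul_right (c3 hxy2 hQ).symm).mul_right
      (c1 hQ.1 hγ2).inv_right).mul_right (c1 hQ.1 hγ1).inv_right
  have hγ' : Commute (π (cmt x1 y1)) (π (y2 * x2)) :=
    hvb ▸ (c3 hxy2 hγ1').symm.mul_right (c1 hγ1'.1 hγ2).inv_right
  have hP' : Commute (π (cmt y2⁻¹ x1)) (π (y2 * x2)) :=
    hvb ▸ (c3 hxy2 hP).symm.mul_right (c1 hP.1 hγ2).inv_right
  rw [← QuotientGroup.ker_mk' N, ← π.eq_iff]
  simpa only [map_cmt, map_mul, map_inv] using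
    (cmt_mul_conj_mul_mul_inv_eq (by simpa only [map_cmt, map_mul, map_inv] using hQ')
      (by simpa only [map_cmt, map_mul, map_inv] using hγ')
      (by simpa only [map_cmt, map_mul, map_inv] using hP')).symm

theorem stmt_15 {F : Type*} [Group F] (R1 R2 R3 : Subgroup F)
    [R1.Normal] [R2.Normal] [R3.Normal]
    (D : Subgroup F)
    (hD : D = ⁅R1, R2 ⊓ R3⁆ ⊔ ⁅R2, R3 ⊓ R1⁆ ⊔ ⁅R3, R1 ⊓ R2⁆)
    (x1 x2 y1 y2 : F) (hx1 : x1 ∈ R1) (hx2 : x2 ∈ R1)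
    (hy1 : y1 ∈ R2) (hy2 : y2 ∈ R2)
    (h1 : x1 * y1 ∈ R3) (h2 : x2 * y2 ∈ R3) :
    cmt (x1 * x2) ((x2⁻¹ * y1 * x2) * y2) * (cmt x2 y2)⁻¹ * (cmt x1 y1)⁻¹ ∈ R1 ⊓ R2 ⊓ R3 ∧
    cmt y2⁻¹ x1 * cmt y1⁻¹ x2 *
      (cmt (x1 * x2) ((x2⁻¹ * y1 * x2) * y2) * (cmt x2 y2)⁻¹ * (cmt x1 y1)⁻¹)⁻¹ ∈ D ∧
    ∃ u ∈ R1 ⊓ R2 ⊓ R3, ∃ d ∈ D, cmt y2⁻¹ x1 * cmt y1⁻¹ x2 = u * d := by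
  have : D.Normal := hD ▸ inferInstance
  have hA := cmt_mul_conj_mul_mul_inv_mem_inf_inf hx1 hx2 hy1 hy2 h1 h2
  have hd := cross_effect_mem (N := D) (hD ▸ le_sup_left.trans le_sup_left) (hD ▸ le_sup_right)
    hx1 hx2 hy1 hy2 h1 h2
  exact ⟨hA, Subgroup.Normal.mem_comm ‹_› hd, _, hA, _, hd, (mul_inv_cancel_left _ _).symm⟩
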